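/- arXiv:1804.07103 — 2 statements merged into one kernel-verified Lean document; each statement's English description precedes it below -/
import Mathlib

section
/- The Lanczos recurrence produces an orthonormal basis: if H is a Hermitian matrix and the Lanczos iteration (with y = τH·vᵢ − βᵢ·vᵢ₋₁, αᵢ = ⟨vᵢ, y⟩, y ← y − αᵢvᵢ, βᵢ₊₁ = ‖y‖, vᵢ₊₁ = y/βᵢ₊₁) runs with all βᵢ₊₁ ≠ 0 starting from a unit vector v₁, then the vectors v₁, ..., vₘ are pairwise orthogonal unit vectors. -/
/-!
Each new vector `v (k+1)` is a multiple of `A v k - β k • v (k-1) - α k • v k`. It is orthogonal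
to `v k` by the choice of `α k`, and to `v j` for `j < k` because self-adjointness moves `A` onto
`v j`, where the three-term recurrence at step `j` expands `A v j` in `v (j-1), v j, v (j+1)`:
only `v (j+1) = v k` survives, and its coefficient `β k` cancels the `- β k • v (k-1)` term.
Normalisation by `β (k+1) = ‖⋯‖ ≠ 0` makes `v (k+1)` a unit vector.
-/

open scoped ComplexOrder InnerProductSpace

namespace Lanczos

variable {𝕜 E : Type*} [RCLike 𝕜] [NormedAddCommGroup E] [InnerProductSpace 𝕜 E]

variable (𝕜) in
def OrthonormalIcc (v : ℕ → E) (k : ℕ) : Prop :=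
  ∀ i j, 1 ≤ i → i ≤ k → 1 ≤ j → j ≤ k → ⟪v i, v j⟫_𝕜 = if i = j then 1 else 0

theorem orthonormalIcc_zero (v : ℕ → E) : OrthonormalIcc 𝕜 v 0 := by
  intro i j hi hi0
  omega

theorem OrthonormalIcc.succ {v : ℕ → E} {k : ℕ} (hv : OrthonormalIcc 𝕜 v k)
    (hnorm : ‖v (k + 1)‖ = 1) (horth : ∀ j, 1 ≤ j → j ≤ k → ⟪v j, v (k + 1)⟫_𝕜 = 0) :
    OrthonormalIcc 𝕜 v (k + 1) := by
  intro i j hi hik hj hjk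
  rcases Nat.le_succ_iff.mp hik with hik | rfl <;>
    rcases Nat.le_succ_iff.mp hjk with hjk | rfl
  · exact hv i j hi hik hj hjk
  · rw [horth i hi (by omega), if_neg (by omega)]
  · rw [← inner_conj_symm, horth j hj (by omega), map_zero, if_neg (by omega)]
  · rw [inner_self_eq_norm_sq_to_K, hnorm, if_pos rfl]
    norm_num

structure IsLanczosStep (A : E →ₗ[𝕜] E) (v : ℕ → E) (α : ℕ → 𝕜) (β : ℕ → ℝ) (i : ℕ) :
    Prop where
  alpha_eq : α i = ⟪v i, A (v i) - (β i : 𝕜) • v (i - 1)⟫_𝕜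
  beta_eq : β (i + 1) = ‖A (v i) - (β i : 𝕜) • v (i - 1) - α i • v i‖
  beta_ne_zero : β (i + 1) ≠ 0
  v_succ_eq : v (i + 1) = ((β (i + 1) : 𝕜))⁻¹ • (A (v i) - (β i : 𝕜) • v (i - 1) - α i • v i)

namespace IsLanczosStep

variable {A : E →ₗ[𝕜] E} {v : ℕ → E} {α : ℕ → 𝕜} {β : ℕ → ℝ} {i : ℕ}

theorem apply_eq (h : IsLanczosStep A v α β i) :
    A (v i) = (β (i + 1) : 𝕜) • v (i + 1) + (β i : 𝕜) • v (i - 1) + α i • v i := by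
  have hβ : (β (i + 1) : 𝕜) ≠ 0 := RCLike.ofReal_ne_zero.mpr h.beta_ne_zero
  rw [h.v_succ_eq, smul_inv_smul₀ hβ]
  abel

theorem norm_succ (h : IsLanczosStep A v α β i) : ‖v (i + 1)‖ = 1 := by
  have hβ : 0 < β (i + 1) := (h.beta_eq ▸ norm_nonneg _ : 0 ≤ β (i + 1)).lt_of_ne' h.beta_ne_zero
  rw [h.v_succ_eq, norm_smul, ← h.beta_eq, norm_inv, RCLike.norm_ofReal, abs_of_pos hβ,
    inv_mul_cancel₀ hβ.ne']

theorem inner_succ_self (h : IsLanczosStep A v α β i) (hvi : ⟪v i, v i⟫_𝕜 = 1) :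
    ⟪v i, v (i + 1)⟫_𝕜 = 0 := by
  rw [h.v_succ_eq, inner_smul_right, inner_sub_right, inner_smul_right, ← h.alpha_eq, hvi,
    mul_one, sub_self, mul_zero]

theorem inner_succ_of_lt {j k : ℕ} (hA : A.IsSymmetric) (hβ1 : β 1 = 0)
    (hj : IsLanczosStep A v α β j) (hk : IsLanczosStep A v α β k) (h1j : 1 ≤ j) (hjk : j < k)
    (hv : OrthonormalIcc 𝕜 v k) : ⟪v j, v (k + 1)⟫_𝕜 = 0 := by
  have hv_prev : (β j : 𝕜) * ⟪v (j - 1), v k⟫_𝕜 = 0 := by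
    rcases h1j.eq_or_lt with rfl | h1j
    · rw [hβ1, RCLike.ofReal_zero, zero_mul]
    · rw [hv (j - 1) k (by omega) (by omega) (by omega) le_rfl, if_neg (by omega), mul_zero]
  have hAvk : ⟪v j, A (v k)⟫_𝕜 = (β (j + 1) : 𝕜) * ⟪v (j + 1), v k⟫_𝕜 := by
    rw [← hA, hj.apply_eq, inner_add_left, inner_add_left, inner_smul_left, inner_smul_left,
      inner_smul_left, RCLike.conj_ofReal, RCLike.conj_ofReal, hv_prev,
      hv j k h1j hjk.le (by omega) le_rfl, if_neg hjk.ne, mul_zero, add_zero, add_zero]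
  rw [hk.v_succ_eq, inner_smul_right, inner_sub_right, inner_sub_right, inner_smul_right,
    inner_smul_right, hAvk, hv j k h1j hjk.le (by omega) le_rfl, if_neg hjk.ne,
    hv (j + 1) k (by omega) hjk (by omega) le_rfl, hv j (k - 1) h1j (by omega) (by omega) (by omega)]
  rcases (Nat.succ_le_of_lt hjk).eq_or_lt with rfl | hjk'
  · simp
  · rw [if_neg hjk'.ne, if_neg (by omega)]
    ring

end IsLanczosStep

theorem orthonormalIcc_of_isLanczosStep {A : E →ₗ[𝕜] E} {v : ℕ → E} {α : ℕ → 𝕜} {β : ℕ → ℝ}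
    (hA : A.IsSymmetric) (hβ1 : β 1 = 0) (hv1 : ‖v 1‖ = 1) :
    ∀ m, (∀ i, 1 ≤ i → i < m → IsLanczosStep A v α β i) → OrthonormalIcc 𝕜 v m
  | 0, _ => orthonormalIcc_zero v
  | k + 1, hstep => by
    have hv := orthonormalIcc_of_isLanczosStep hA hβ1 hv1 k
      fun i hi hik => hstep i hi (by omega)
    rcases Nat.eq_zero_or_pos k with rfl | hk
    · exact hv.succ hv1 (by omega)
    have hstep_k := hstep k hk (by omega)
    refine hv.succ hstep_k.norm_succ fun j hj hjk => ?_
    rcases hjk.eq_or_lt with rfl | hjk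
    · exact hstep_k.inner_succ_self ((hv j j hj le_rfl hj le_rfl).trans (if_pos rfl))
    · exact (hstep j hj (by omega)).inner_succ_of_lt hA hβ1 hstep_k hj hjk hv

end Lanczos

theorem lanczos_orthonormal_general (N m : ℕ)
    (H : Matrix (Fin N) (Fin N) ℂ) (hH : H.IsHermitian) (τ : ℝ)
    (v : ℕ → EuclideanSpace ℂ (Fin N)) (α : ℕ → ℂ) (β : ℕ → ℝ)
    (hβ1 : β 1 = 0) (hv1 : ‖v 1‖ = 1)
    (hrec : ∀ i, 1 ≤ i → i < m →
      α i = inner (𝕜 := ℂ) (v i)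
          (((τ : ℂ) • ((WithLp.equiv 2 (Fin N → ℂ)).symm (H.mulVec (v i))) - (β i : ℂ) • v (i - 1) :
            EuclideanSpace ℂ (Fin N)))
      ∧ β (i + 1)
          = ‖((τ : ℂ) • ((WithLp.equiv 2 (Fin N → ℂ)).symm (H.mulVec (v i))) - (β i : ℂ) • v (i - 1) - α i • v i :
              EuclideanSpace ℂ (Fin N))‖
      ∧ β (i + 1) ≠ 0
      ∧ v (i + 1)
          = ((β (i + 1) : ℂ))⁻¹ •
            ((τ : ℂ) • ((WithLp.equiv 2 (Fin N → ℂ)).symm (H.mulVec (v i))) - (β i : ℂ) • v (i - 1) - α i • v i :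
              EuclideanSpace ℂ (Fin N))) :
    ∀ i j, 1 ≤ i → i ≤ m → 1 ≤ j → j ≤ m →
      inner (𝕜 := ℂ) (v i) (v j) = if i = j then (1 : ℂ) else 0 := by
  let A : EuclideanSpace ℂ (Fin N) →ₗ[ℂ] EuclideanSpace ℂ (Fin N) :=
    (τ : ℂ) • Matrix.toLpLin 2 2 H
  have hA : A.IsSymmetric :=
    (Matrix.isSymmetric_toEuclideanLin_iff.mpr hH).smul (RCLike.conj_ofReal τ)
  refine Lanczos.orthonormalIcc_of_isLanczosStep (α := α) hA hβ1 hv1 m fun i hi him => ?_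
  obtain ⟨hα, hβ, hβ0, hv⟩ := hrec i hi him
  exact ⟨hα, hβ, hβ0, hv⟩

theorem lanczos_orthonormal (N m : ℕ) (hm : 1 ≤ m)
    (H : Matrix (Fin N) (Fin N) ℂ) (hH : H.IsHermitian) (τ : ℝ)
    (v : ℕ → EuclideanSpace ℂ (Fin N)) (α : ℕ → ℂ) (β : ℕ → ℝ)
    (hv0 : v 0 = 0) (hβ1 : β 1 = 0) (hv1 : ‖v 1‖ = 1)
    (hrec : ∀ i, 1 ≤ i → i < m →
      α i = inner (𝕜 := ℂ) (v i)
          (((τ : ℂ) • ((WithLp.equiv 2 (Fin N → ℂ)).symm (H.mulVec (v i))) - (β i : ℂ) • v (i - 1) :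
            EuclideanSpace ℂ (Fin N)))
      ∧ β (i + 1)
          = ‖((τ : ℂ) • ((WithLp.equiv 2 (Fin N → ℂ)).symm (H.mulVec (v i))) - (β i : ℂ) • v (i - 1) - α i • v i :
              EuclideanSpace ℂ (Fin N))‖
      ∧ β (i + 1) ≠ 0
      ∧ v (i + 1)
          = ((β (i + 1) : ℂ))⁻¹ •
            ((τ : ℂ) • ((WithLp.equiv 2 (Fin N → ℂ)).symm (H.mulVec (v i))) - (β i : ℂ) • v (i - 1) - α i • v i :
              EuclideanSpace ℂ (Fin N))) :
    ∀ i j, 1 ≤ i → i ≤ m → 1 ≤ j → j ≤ m →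
      inner (𝕜 := ℂ) (v i) (v j) = if i = j then (1 : ℂ) else 0 :=
  lanczos_orthonormal_general N m H hH τ v α β hβ1 hv1 hrec
end

section
/- Krylov exactness for polynomials: if V_m is a matrix whose columns form an orthonormal basis of the Krylov subspace span{u, Hu, ..., H^{m−1}u} with v₁ = u, and T_m = V_mᴴ H V_m, then for every polynomial p of degree < m, p(H)·u = V_m·p(T_m)·e₁. -/
/-!
Since `Vmᴴ * Vm = 1`, the projection `Vm * Vmᴴ` fixes the Krylov space, so each Krylov vector
satisfies `H ^ (j + 1) * u = Vm * Vmᴴ * H * (H ^ j * u)`. Inductively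
`H ^ j * u = Vm * Tm ^ j * e₁` for `j < m`, and the polynomial identity follows by linearity.
-/

namespace Matrix

variable {R n k : Type*} [CommSemiring R] [Fintype n] [Fintype k] [DecidableEq k]
  {V : Matrix n k R} {W : Matrix k n R} {H : Matrix n n R} {w : k → R} {m : ℕ}

theorem mulVec_mulVec_eq_self_of_mem_range (hWV : W * V = 1) {x : n → R}
    (hx : x ∈ LinearMap.range V.mulVecLin) : V *ᵥ (W *ᵥ x) = x := by
  obtain ⟨c, rfl⟩ := hx
  rw [mulVecLin_apply, mulVec_mulVec _ W, hWV, one_mulVec]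

theorem pow_mulVec_mulVec_eq_mulVec_compression_pow [DecidableEq n] (hWV : W * V = 1)
    (hmem : ∀ j < m, H ^ j *ᵥ (V *ᵥ w) ∈ LinearMap.range V.mulVecLin) :
    ∀ j < m, H ^ j *ᵥ (V *ᵥ w) = V *ᵥ ((W * H * V) ^ j *ᵥ w) := by
  intro j
  induction j with
  | zero => simp
  | succ j ih =>
    intro hj
    calc H ^ (j + 1) *ᵥ (V *ᵥ w)
        = V *ᵥ (W *ᵥ (H ^ (j + 1) *ᵥ (V *ᵥ w))) :=
          (mulVec_mulVec_eq_self_of_mem_range hWV (hmem _ hj)).symm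
      _ = V *ᵥ (W *ᵥ (H *ᵥ (H ^ j *ᵥ (V *ᵥ w)))) := by
          rw [pow_succ', ← mulVec_mulVec _ H]
      _ = V *ᵥ ((W * H * V) ^ (j + 1) *ᵥ w) := by
          rw [ih (by omega), pow_succ']
          simp only [mulVec_mulVec, Matrix.mul_assoc]

theorem aeval_mulVec_mulVec_eq_mulVec_aeval_compression [DecidableEq n] (hWV : W * V = 1)
    (hmem : ∀ j < m, H ^ j *ᵥ (V *ᵥ w) ∈ LinearMap.range V.mulVecLin)
    {p : Polynomial R} (hp : p.natDegree < m) :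
    Polynomial.aeval H p *ᵥ (V *ᵥ w) = V *ᵥ (Polynomial.aeval (W * H * V) p *ᵥ w) := by
  simp only [Polynomial.aeval_eq_sum_range' hp, sum_mulVec, mulVec_sum, smul_mulVec, mulVec_smul]
  refine Finset.sum_congr rfl fun j hj => ?_
  rw [pow_mulVec_mulVec_eq_mulVec_compression_pow hWV hmem j (Finset.mem_range.mp hj)]

end Matrix

open Matrix in
theorem krylov_polynomial_exactness_general (N m : ℕ) (hm0 : 0 < m)
    (H : Matrix (Fin N) (Fin N) ℂ)
    (u : Fin N → ℂ)
    (Vm : Matrix (Fin N) (Fin m) ℂ)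
    (horth : Vm.conjTranspose * Vm = 1)
    (hspan : Submodule.span ℂ (Set.range fun j : Fin m => (fun i => Vm i j))
        = Submodule.span ℂ (Set.range fun k : Fin m => (H ^ (k : ℕ)).mulVec u))
    (hfirst : (fun i => Vm i ⟨0, hm0⟩) = u)
    (Tm : Matrix (Fin m) (Fin m) ℂ)
    (hTm : Tm = Vm.conjTranspose * H * Vm)
    (e₁ : Fin m → ℂ) (he₁ : e₁ = Pi.single ⟨0, hm0⟩ 1) :
    ∀ p : Polynomial ℂ, p.degree < (m : ℕ) →
      (Polynomial.aeval H p).mulVec u = Vm.mulVec ((Polynomial.aeval Tm p).mulVec e₁) := by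
  intro p hp
  have hnat : p.natDegree < m := by
    rcases eq_or_ne p 0 with rfl | hp0
    · simpa using hm0
    · exact (Polynomial.natDegree_lt_iff_degree_lt hp0).mpr hp
  have hu : u = Vm *ᵥ e₁ := by
    rw [he₁, mulVec_single_one, ← hfirst]
    rfl
  have hmem : ∀ j < m, H ^ j *ᵥ u ∈ LinearMap.range Vm.mulVecLin := fun j hj => by
    rw [range_mulVecLin]
    exact hspan ▸ Submodule.subset_span ⟨⟨j, hj⟩, rfl⟩
  subst hTm
  rw [hu] at hmem ⊢
  exact aeval_mulVec_mulVec_eq_mulVec_aeval_compression horth hmem hnat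

theorem krylov_polynomial_exactness (N m : ℕ) (hm0 : 0 < m) (hmN : m ≤ N)
    (H : Matrix (Fin N) (Fin N) ℂ) (hH : H.IsHermitian)
    (u : Fin N → ℂ)
    (hu : ∑ i, Complex.normSq (u i) = 1)
    (hind : LinearIndependent ℂ (fun k : Fin m => (H ^ (k : ℕ)).mulVec u))
    (Vm : Matrix (Fin N) (Fin m) ℂ)
    (horth : Vm.conjTranspose * Vm = 1)
    (hspan : Submodule.span ℂ (Set.range fun j : Fin m => (fun i => Vm i j))
        = Submodule.span ℂ (Set.range fun k : Fin m => (H ^ (k : ℕ)).mulVec u))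
    (hfirst : (fun i => Vm i ⟨0, hm0⟩) = u)
    (Tm : Matrix (Fin m) (Fin m) ℂ)
    (hTm : Tm = Vm.conjTranspose * H * Vm)
    (e₁ : Fin m → ℂ) (he₁ : e₁ = Pi.single ⟨0, hm0⟩ 1) :
    ∀ p : Polynomial ℂ, p.degree < (m : ℕ) →
      (Polynomial.aeval H p).mulVec u = Vm.mulVec ((Polynomial.aeval Tm p).mulVec e₁) :=
  krylov_polynomial_exactness_general N m hm0 H u Vm horth hspan hfirst Tm hTm e₁ he₁
end
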